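/- arXiv:2206.05062 — 3 statements merged into one kernel-verified Lean document; each statement's English description precedes it below -/
import Mathlib

section
/- For all nonnegative integers n and p: P(n+p, p) = Σ_{k=0}^{⌊n/2⌋} Q_most(n−2k, p) · P(p+k, p), where P(a,b) is the number of partitions of a into exactly b parts and Q_most(a,p) is the number of partitions of a into distinct parts each at most p. -/
/-!
Both sides count partitions of `n` with all parts at most `p`. For the left side this is
conjugation, proved here through the common recurrence obtained by asking whether `1` (resp. `p`)
is a part. For the right side, such a partition is uniquely `σ + 2ν` with `σ` (the parts of odd
multiplicity) distinct and `ν` arbitrary, both with parts at most `p`; grouping by `k = |ν|`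
gives the sum, where `ν` is again counted by `P(p + k, p)`.
-/

/-- `P2 n m` : number of integer partitions of `n` into exactly `m` parts. -/
def P2 (n m : ℕ) : ℕ :=
  Fintype.card {π : n.Partition // π.parts.card = m}

/-- `Qmost n p` : number of integer partitions of `n` into distinct parts
with each part at most `p`. -/
def Qmost (n p : ℕ) : ℕ :=
  Fintype.card {π : n.Partition // π.parts.Nodup ∧ ∀ i ∈ π.parts, i ≤ p}

def Pmost (n p : ℕ) : ℕ :=
  Fintype.card {π : n.Partition // ∀ i ∈ π.parts, i ≤ p}

theorem Fintype.card_subtype_eq_card_and_add_card_and_not {α : Type*} [Fintype α]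
    (P C : α → Prop) [DecidablePred P] [DecidablePred C] :
    card {x // P x} = card {x // P x ∧ C x} + card {x // P x ∧ ¬C x} := by
  simp only [card_subtype, ← Finset.filter_filter, Finset.card_filter_add_card_filter_not]

namespace Multiset

theorem map_add_one_map_sub_one {s : Multiset ℕ} (hs : ∀ i ∈ s, 0 < i) :
    (s.map (· - 1)).map (· + 1) = s := by
  rw [map_map]
  conv_rhs => rw [← map_id' s]
  exact map_congr rfl fun i hi => Nat.sub_add_cancel (hs i hi)

theorem sum_map_add_one (s : Multiset ℕ) : (s.map (· + 1)).sum = s.sum + card s := by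
  simp [sum_map_add]

end Multiset

namespace Nat.Partition

open Multiset

theorem card_parts_le {n : ℕ} (π : n.Partition) : card π.parts ≤ n := by
  simpa [π.parts_sum] using card_nsmul_le_sum (s := π.parts) (a := 1) fun _ hi => π.parts_pos hi

theorem parts_eq_zero_iff_forall_le_zero {n : ℕ} (π : n.Partition) :
    π.parts = 0 ↔ ∀ i ∈ π.parts, i ≤ 0 := by
  refine ⟨by simp_all, fun h => eq_zero_of_forall_notMem fun i hi => ?_⟩
  exact (h i hi).not_gt (π.parts_pos hi)

theorem card_subtype_and_mem_parts {n a : ℕ} (ha : 0 < a) (P Q : Multiset ℕ → Prop)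
    [DecidablePred P] [DecidablePred Q] (hPQ : ∀ s, P (a ::ₘ s) ↔ Q s) :
    Fintype.card {π : (n + a).Partition // P π.parts ∧ a ∈ π.parts} =
      Fintype.card {π : n.Partition // Q π.parts} := by
  have e := (Equiv.subtypeSubtypeEquivSubtypeInter (fun π : (n + a).Partition => a ∈ π.parts)
    (fun π => P π.parts)).symm.trans <|
      (partitionWithPartEquiv ha (Nat.le_add_left a n)).subtypeEquiv (q := fun π => Q π.parts)
        fun π => by rw [partitionWithPartEquiv_apply_parts, ← hPQ, cons_erase π.2]
  rw [Nat.add_sub_cancel] at e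
  exact Fintype.card_congr ((Equiv.subtypeEquivRight fun _ => and_comm).trans e)

def predPartsEquiv (n m : ℕ) :
    {π : (n + m).Partition // card π.parts = m ∧ 1 ∉ π.parts} ≃
      {π : n.Partition // card π.parts = m} where
  toFun π := ⟨⟨π.1.parts.map (· - 1), by
      simp only [mem_map, forall_exists_index, and_imp]
      rintro _ i hi rfl
      have : i ≠ 1 := fun h => π.2.2 (h ▸ hi)
      have := π.1.parts_pos hi
      omega, by
      have := sum_map_add_one (π.1.parts.map (· - 1))
      rw [map_add_one_map_sub_one fun _ => π.1.parts_pos, π.1.parts_sum, card_map, π.2.1] at this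
      omega⟩, by simp [π.2.1]⟩
  invFun π := ⟨⟨π.1.parts.map (· + 1), by simp, by simp [π.1.parts_sum, π.2]⟩,
    by simp [π.2], by simpa using fun h => lt_irrefl 0 (π.1.parts_pos h)⟩
  left_inv π := Subtype.ext <| Nat.Partition.ext <| map_add_one_map_sub_one fun _ => π.1.parts_pos
  right_inv π := Subtype.ext <| Nat.Partition.ext <| by simp [map_map]

end Nat.Partition

open Multiset Nat.Partition

theorem P2_zero_right_eq_Pmost (n : ℕ) : P2 n 0 = Pmost n 0 :=
  Fintype.card_congr <| Equiv.subtypeEquivRight fun π => by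
    rw [card_eq_zero, parts_eq_zero_iff_forall_le_zero]

theorem P2_eq_zero_of_lt {n m : ℕ} (h : n < m) : P2 n m = 0 :=
  Fintype.card_eq_zero_iff.mpr ⟨fun π => (π.1.card_parts_le.trans_lt (π.2.symm ▸ h)).false⟩

theorem P2_succ (n q : ℕ) : P2 (n + q + 1) (q + 1) = P2 (n + q) q + P2 n (q + 1) := by
  rw [P2, Fintype.card_subtype_eq_card_and_add_card_and_not _ fun π => 1 ∈ π.parts]
  congr 1
  · exact card_subtype_and_mem_parts one_pos (fun s => card s = q + 1) (fun s => card s = q)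
      fun s => by simp
  · exact Fintype.card_congr (predPartsEquiv n (q + 1))

theorem Pmost_succ_of_le {n q : ℕ} (h : n ≤ q) : Pmost n (q + 1) = Pmost n q :=
  Fintype.card_congr <| Equiv.subtypeEquivRight fun _ =>
    ⟨fun _ _ hi => (le_of_mem_parts hi).trans h, fun h' i hi => (h' i hi).trans q.le_succ⟩

theorem Pmost_add_succ (m q : ℕ) :
    Pmost (m + (q + 1)) (q + 1) = Pmost (m + (q + 1)) q + Pmost m (q + 1) := by
  rw [Pmost, Fintype.card_subtype_eq_card_and_add_card_and_not _ fun π => q + 1 ∈ π.parts,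
    add_comm]
  congr 1
  · refine Fintype.card_congr <| Equiv.subtypeEquivRight fun π => ⟨?_, ?_⟩
    · rintro ⟨hle, hq⟩ i hi
      exact Nat.le_of_lt_succ <| (hle i hi).lt_of_ne fun h => hq (h ▸ hi)
    · exact fun h =>
        ⟨fun i hi => (h i hi).trans q.le_succ, fun hq => (h _ hq).not_gt q.lt_succ_self⟩
  · exact card_subtype_and_mem_parts q.succ_pos (fun s => ∀ i ∈ s, i ≤ q + 1)
      (fun s => ∀ i ∈ s, i ≤ q + 1) fun s => by simp

theorem P2_add_eq_Pmost (n p : ℕ) : P2 (n + p) p = Pmost n p := by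
  induction p generalizing n with
  | zero => exact P2_zero_right_eq_Pmost n
  | succ q ihq =>
    induction n using Nat.strong_induction_on with
    | _ n ihn =>
      rw [← add_assoc, P2_succ, ihq]
      rcases le_or_gt n q with hle | hlt
      · rw [P2_eq_zero_of_lt (by omega), Pmost_succ_of_le hle, add_zero]
      · obtain ⟨m, rfl⟩ := Nat.exists_eq_add_of_le' hlt
        rw [ihn m (by omega), Pmost_add_succ]

namespace Multiset

def halve (s : Multiset ℕ) : Multiset ℕ :=
  ∑ a ∈ s.toFinset, replicate (s.count a / 2) a

def oddPart (s : Multiset ℕ) : Multiset ℕ :=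
  s.dedup.filter fun a => Odd (s.count a)

@[simp]
theorem count_halve (s : Multiset ℕ) (b : ℕ) : (halve s).count b = s.count b / 2 := by
  simp only [halve, count_sum', count_replicate, Finset.sum_ite_eq', mem_toFinset]
  split_ifs with hb
  · rfl
  · simp [count_eq_zero_of_notMem hb]

@[simp]
theorem count_oddPart (s : Multiset ℕ) (b : ℕ) :
    (oddPart s).count b = if Odd (s.count b) then 1 else 0 := by
  by_cases hb : b ∈ s
  · simp [oddPart, count_filter, hb]
  · simp [oddPart, hb, count_eq_zero_of_notMem]

theorem nodup_oddPart (s : Multiset ℕ) : (oddPart s).Nodup :=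
  (nodup_dedup s).filter _

theorem halve_le (s : Multiset ℕ) : halve s ≤ s :=
  le_iff_count.mpr fun b => by simpa using Nat.div_le_self _ 2

theorem oddPart_le (s : Multiset ℕ) : oddPart s ≤ s :=
  (filter_le _ _).trans (dedup_le s)

theorem oddPart_add_halve_add_halve (s : Multiset ℕ) : oddPart s + (halve s + halve s) = s := by
  ext b
  simp only [count_add, count_halve, count_oddPart, Nat.odd_iff]
  split_ifs <;> omega

theorem oddPart_add_add {σ : Multiset ℕ} (hσ : σ.Nodup) (ν : Multiset ℕ) :
    oddPart (σ + (ν + ν)) = σ := by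
  ext b
  have := nodup_iff_count_le_one.mp hσ b
  simp only [count_oddPart, count_add, Nat.odd_iff]
  split_ifs <;> omega

theorem halve_add_add {σ : Multiset ℕ} (hσ : σ.Nodup) (ν : Multiset ℕ) :
    halve (σ + (ν + ν)) = ν := by
  ext b
  have := nodup_iff_count_le_one.mp hσ b
  simp only [count_halve, count_add]
  omega

theorem sum_oddPart_add_two_mul_sum_halve (s : Multiset ℕ) :
    (oddPart s).sum + 2 * (halve s).sum = s.sum := by
  conv_rhs => rw [← oddPart_add_halve_add_halve s]
  rw [sum_add, sum_add, two_mul]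

end Multiset

namespace Nat.Partition

variable {n k : ℕ} {q : ℕ → Prop}

def oddPartHalveEquiv (hk : 2 * k ≤ n) :
    {π : n.Partition // (∀ i ∈ π.parts, q i) ∧ (halve π.parts).sum = k} ≃
      {σ : (n - 2 * k).Partition // σ.parts.Nodup ∧ ∀ i ∈ σ.parts, q i} ×
        {ν : k.Partition // ∀ i ∈ ν.parts, q i} where
  toFun π :=
    (⟨⟨oddPart π.1.parts, fun hi => π.1.parts_pos (mem_of_le (oddPart_le _) hi), by
        have := sum_oddPart_add_two_mul_sum_halve π.1.parts
        rw [π.2.2, π.1.parts_sum] at this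
        omega⟩,
      nodup_oddPart _, fun i hi => π.2.1 i (mem_of_le (oddPart_le _) hi)⟩,
     ⟨⟨halve π.1.parts, fun hi => π.1.parts_pos (mem_of_le (halve_le _) hi), π.2.2⟩,
      fun i hi => π.2.1 i (mem_of_le (halve_le _) hi)⟩)
  invFun x :=
    ⟨⟨x.1.1.parts + (x.2.1.parts + x.2.1.parts), by
        simp only [mem_add]
        rintro i (hi | hi | hi) <;> simp [parts_pos _ hi], by
        simp only [sum_add, parts_sum]
        omega⟩, by
      simp only [mem_add]
      exact ⟨by rintro i (hi | hi | hi) <;> simp [x.1.2.2 i, x.2.2 i, hi], by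
        rw [halve_add_add x.1.2.1, parts_sum]⟩⟩
  left_inv π := Subtype.ext <| Nat.Partition.ext <| oddPart_add_halve_add_halve _
  right_inv x := Prod.ext (Subtype.ext <| Nat.Partition.ext <| oddPart_add_add x.1.2.1 _)
    (Subtype.ext <| Nat.Partition.ext <| halve_add_add x.1.2.1 _)

theorem card_forall_parts_eq_sum [DecidablePred q] (n : ℕ) :
    Fintype.card {π : n.Partition // ∀ i ∈ π.parts, q i} =
      ∑ k ∈ Finset.range (n / 2 + 1),
        Fintype.card {σ : (n - 2 * k).Partition // σ.parts.Nodup ∧ ∀ i ∈ σ.parts, q i} *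
          Fintype.card {ν : k.Partition // ∀ i ∈ ν.parts, q i} := by
  have hfib (π : n.Partition) : (halve π.parts).sum ∈ Finset.range (n / 2 + 1) := by
    have := sum_oddPart_add_two_mul_sum_halve π.parts
    rw [π.parts_sum] at this
    exact Finset.mem_range.mpr (by omega)
  rw [Fintype.card_subtype, Finset.card_eq_sum_card_fiberwise fun π _ => hfib π]
  refine Finset.sum_congr rfl fun k hk => ?_
  have hk : 2 * k ≤ n := by have := Finset.mem_range.mp hk; omega
  rw [← Fintype.card_prod, ← Fintype.card_congr (oddPartHalveEquiv hk), Fintype.card_subtype,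
    Finset.filter_filter]

end Nat.Partition

theorem Pmost_eq_sum (n p : ℕ) :
    Pmost n p = ∑ k ∈ Finset.range (n / 2 + 1), Qmost (n - 2 * k) p * Pmost k p :=
  Nat.Partition.card_forall_parts_eq_sum n

theorem stmt_2 (n p : ℕ) :
    P2 (n + p) p = ∑ k ∈ Finset.range (n / 2 + 1), Qmost (n - 2 * k) p * P2 (p + k) p := by
  rw [P2_add_eq_Pmost, Pmost_eq_sum]
  refine Finset.sum_congr rfl fun k _ => ?_
  rw [add_comm p k, P2_add_eq_Pmost]
end

section
/- For all nonnegative integers n, m, p: Σ_{k=0}^{⌊n/4⌋} Σ_{l=0}^{⌊m/4⌋} (−1)^l · P(n−4k, m−4l, p) · Q(k, l, p) = Σ_{k=0}^{⌊n/2⌋} Σ_{l=0}^{⌊m/2⌋} Q(n−2k, m−2l, p) · Q(k, l, p). -/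
/-!
With `x` marking the size and `y` the number of parts, the series `∑ P(n,m,p) xⁿ yᵐ` is
`∏_{1 ≤ i ≤ p} (1 - xⁱ y)⁻¹` and `∑ Q(n,m,p) xⁿ yᵐ` is `∏_{1 ≤ i ≤ p} (1 + xⁱ y)`. Since
`1 - t⁴ = (1 - t)(1 + t)(1 + t²)`, multiplying the first series by `∏ (1 - x⁴ⁱ y⁴)`, which is
the second one at `(x⁴, -y⁴)`, gives the second series times itself at `(x², y²)`. The identity
is the equality of the coefficients of `xⁿ yᵐ` on both sides.
-/

/-- `P n m p` : number of integer partitions of `n` into exactly `m` parts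
with each part at most `p`. -/
def P (n m p : ℕ) : ℕ :=
  Fintype.card {π : n.Partition // π.parts.card = m ∧ ∀ i ∈ π.parts, i ≤ p}

/-- `Q n m p` : number of integer partitions of `n` into exactly `m` distinct parts
with each part at most `p`. -/
def Q (n m p : ℕ) : ℕ :=
  Fintype.card {π : n.Partition // π.parts.card = m ∧ π.parts.Nodup ∧ ∀ i ∈ π.parts, i ≤ p}

namespace Nat.Partition

theorem card_subtype_eq_card_notMem_add (n : ℕ) (S : Multiset ℕ → Prop) [DecidablePred S]
    {a : ℕ} (ha : 0 < a) :
    Fintype.card {π : n.Partition // S π.parts}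
      = Fintype.card {π : n.Partition // S π.parts ∧ a ∉ π.parts}
        + if a ≤ n then Fintype.card {q : (n - a).Partition // S (a ::ₘ q.parts)} else 0 := by
  have hsplit := Finset.card_filter_add_card_filter_not (s := Finset.univ.filter (S ·.parts))
    (p := fun π : n.Partition => a ∈ π.parts)
  simp only [Finset.filter_filter, ← Fintype.card_subtype] at hsplit
  rw [← hsplit, add_comm]
  congr 1
  split_ifs with han
  · exact Fintype.card_congr <| (Equiv.subtypeEquivRight fun _ => and_comm).trans <|
      (Equiv.subtypeSubtypeEquivSubtypeInter (fun π : n.Partition => a ∈ π.parts)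
        (S ·.parts)).symm.trans <|
      Equiv.subtypeEquiv (partitionWithPartEquiv ha han) fun π => by
        rw [partitionWithPartEquiv_apply_parts, Multiset.cons_erase π.2]
  · exact Fintype.card_eq_zero_iff.2 ⟨fun π => han (le_of_mem_parts π.2.2)⟩

theorem card_subtype_forall_le_zero (n : ℕ) (S : Multiset ℕ → Prop) [DecidablePred S] :
    Fintype.card {π : n.Partition // S π.parts ∧ ∀ i ∈ π.parts, i ≤ 0}
      = if n = 0 ∧ S 0 then 1 else 0 := by
  have hparts (π : n.Partition) : (∀ i ∈ π.parts, i ≤ 0) ↔ π.parts = 0 :=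
    ⟨fun h => Multiset.eq_zero_of_forall_notMem fun i hi =>
      (π.parts_pos hi).ne' (le_zero.1 (h i hi)), fun h => by simp [h]⟩
  simp only [hparts]
  split_ifs with h
  · obtain ⟨rfl, hS⟩ := h
    exact Fintype.card_eq_one_iff.2 ⟨⟨default, hS, partition_zero_parts _⟩,
      fun π => Subtype.ext (Subsingleton.elim _ _)⟩
  · refine Fintype.card_eq_zero_iff.2 ⟨fun ⟨π, hS, h0⟩ => h ⟨?_, h0 ▸ hS⟩⟩
    rw [← π.parts_sum, h0, Multiset.sum_zero]

end Nat.Partition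

theorem Multiset.forall_le_succ_and_notMem_iff {s : Multiset ℕ} {p : ℕ} :
    ((∀ i ∈ s, i ≤ p + 1) ∧ p + 1 ∉ s) ↔ ∀ i ∈ s, i ≤ p :=
  ⟨fun ⟨hle, hp⟩ i hi => Nat.le_of_lt_succ <| (hle i hi).lt_of_ne fun h => hp (h ▸ hi),
    fun h => ⟨fun i hi => (h i hi).trans p.le_succ, fun hp => (h _ hp).not_gt p.lt_succ_self⟩⟩

open Nat.Partition

theorem P_zero (n m : ℕ) : P n m 0 = if n = 0 ∧ m = 0 then 1 else 0 := by
  rw [P, card_subtype_forall_le_zero n (·.card = m)]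
  simp [eq_comm]

theorem Q_zero (n m : ℕ) : Q n m 0 = if n = 0 ∧ m = 0 then 1 else 0 := by
  rw [Q, Fintype.card_congr (Equiv.subtypeEquivRight fun _ => and_assoc.symm),
    card_subtype_forall_le_zero n (fun s => s.card = m ∧ s.Nodup)]
  simp [eq_comm]

theorem P_succ (n m p : ℕ) :
    P n m (p + 1)
      = P n m p + if p + 1 ≤ n ∧ 1 ≤ m then P (n - (p + 1)) (m - 1) (p + 1) else 0 := by
  rw [P, card_subtype_eq_card_notMem_add n (fun s => s.card = m ∧ ∀ i ∈ s, i ≤ p + 1)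
    (Nat.add_one_pos p)]
  congr 1
  · exact Fintype.card_congr <| Equiv.subtypeEquivRight fun π => by
      rw [and_assoc, Multiset.forall_le_succ_and_notMem_iff]
  · cases m with
    | zero => simp
    | succ m =>
      simp only [le_add_iff_nonneg_left, zero_le, and_true, add_tsub_cancel_right, P]
      congr 1
      exact Fintype.card_congr <| Equiv.subtypeEquivRight fun q => by
        simp only [Multiset.card_cons, Multiset.forall_mem_cons, le_refl, true_and,
          Nat.add_right_cancel_iff]

theorem Q_succ (n m p : ℕ) :
    Q n m (p + 1)
      = Q n m p + if p + 1 ≤ n ∧ 1 ≤ m then Q (n - (p + 1)) (m - 1) p else 0 := by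
  rw [Q, card_subtype_eq_card_notMem_add n
    (fun s => s.card = m ∧ s.Nodup ∧ ∀ i ∈ s, i ≤ p + 1) (Nat.add_one_pos p)]
  congr 1
  · exact Fintype.card_congr <| Equiv.subtypeEquivRight fun π => by
      rw [and_assoc, and_assoc, Multiset.forall_le_succ_and_notMem_iff]
  · cases m with
    | zero => simp
    | succ m =>
      simp only [le_add_iff_nonneg_left, zero_le, and_true, add_tsub_cancel_right, Q]
      congr 1
      exact Fintype.card_congr <| Equiv.subtypeEquivRight fun q => by
        simp only [Multiset.card_cons, Multiset.nodup_cons, Multiset.forall_mem_cons, le_refl,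
          true_and, Nat.add_right_cancel_iff, ← Multiset.forall_le_succ_and_notMem_iff (p := p)]
        tauto

open PowerSeries

theorem PowerSeries.coeff_expand_mul_eq_sum {R : Type*} [CommRing R] (d : ℕ) (hd : d ≠ 0)
    (g f : R⟦X⟧) (n : ℕ) :
    coeff n (expand d hd g * f)
      = ∑ k ∈ Finset.range (n / d + 1), coeff k g * coeff (n - d * k) f := by
  rw [coeff_mul, Finset.Nat.sum_antidiagonal_eq_sum_range_succ_mk]
  simp_rw [coeff_expand, ite_mul, zero_mul]
  rw [← Finset.sum_filter]
  symm
  have hd' : 0 < d := Nat.pos_of_ne_zero hd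
  apply Finset.sum_nbij' (d * ·) (· / d)
  · intro k hk
    simp only [Finset.mem_filter, Finset.mem_range, Nat.lt_succ_iff] at hk ⊢
    exact ⟨(Nat.mul_le_mul_left d hk).trans (Nat.mul_div_le n d), dvd_mul_right d k⟩
  · intro i hi
    simp only [Finset.mem_filter, Finset.mem_range, Nat.lt_succ_iff] at hi ⊢
    exact Nat.div_le_div_right hi.1
  · exact fun k _ => Nat.mul_div_cancel_left k hd'
  · exact fun i hi => Nat.mul_div_cancel' (Finset.mem_filter.1 hi).2
  · intro k _
    rw [Nat.mul_div_cancel_left k hd']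

section Bivariate

variable {R : Type*} [CommRing R]

/-- `f(x, y) ↦ f(xᵈ, s yᵈ)`, where `x` is the outer and `y` the inner variable. -/
noncomputable def dilate (d : ℕ) (hd : d ≠ 0) (s : R) : R⟦X⟧⟦X⟧ →+* R⟦X⟧⟦X⟧ :=
  (expand (R := R⟦X⟧) d hd : R⟦X⟧⟦X⟧ →+* R⟦X⟧⟦X⟧).comp
    (map ((expand (R := R) d hd : R⟦X⟧ →+* R⟦X⟧).comp (rescale s)))

theorem dilate_X_pow_mul_C_X (d : ℕ) (hd : d ≠ 0) (s : R) (a : ℕ) :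
    dilate d hd s (X ^ a * C X) = C (C s) * (X ^ a * C X) ^ d := by
  simp only [dilate, RingHom.comp_apply, map_mul, map_pow, map_X, map_C,
    RingHom.coe_coe, expand_X, rescale_X, expand_C]
  ring

theorem coeff_coeff_dilate_mul (d : ℕ) (hd : d ≠ 0) (s : R) (g f : R⟦X⟧⟦X⟧) (n m : ℕ) :
    coeff m (coeff n (dilate d hd s g * f))
      = ∑ k ∈ Finset.range (n / d + 1), ∑ l ∈ Finset.range (m / d + 1),
          s ^ l * coeff l (coeff k g) * coeff (m - d * l) (coeff (n - d * k) f) := by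
  rw [dilate, RingHom.comp_apply, RingHom.coe_coe, coeff_expand_mul_eq_sum, map_sum]
  refine Finset.sum_congr rfl fun k _ => ?_
  rw [coeff_map, RingHom.comp_apply, RingHom.coe_coe, coeff_expand_mul_eq_sum]
  simp only [coeff_rescale]

theorem coeff_coeff_X_pow_mul_C_X_mul (a : ℕ) (f : R⟦X⟧⟦X⟧) (n m : ℕ) :
    coeff m (coeff n (X ^ a * C X * f))
      = if a ≤ n ∧ 1 ≤ m then coeff (m - 1) (coeff (n - a) f) else 0 := by
  rw [mul_right_comm, mul_comm, coeff_C_mul, coeff_X_pow_mul']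
  by_cases ha : a ≤ n
  · rw [if_pos ha, ← pow_one (X : R⟦X⟧), coeff_X_pow_mul']
    simp only [ha, true_and]
  · simp [ha]

end Bivariate

noncomputable def genFunP (p : ℕ) : ℤ⟦X⟧⟦X⟧ := mk fun n => mk fun m => (P n m p : ℤ)

noncomputable def genFunQ (p : ℕ) : ℤ⟦X⟧⟦X⟧ := mk fun n => mk fun m => (Q n m p : ℤ)

theorem genFunP_zero : genFunP 0 = 1 := by
  ext n m
  simp only [genFunP, coeff_mk, P_zero, coeff_one]
  split_ifs <;> simp_all

theorem genFunQ_zero : genFunQ 0 = 1 := by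
  ext n m
  simp only [genFunQ, coeff_mk, Q_zero, coeff_one]
  split_ifs <;> simp_all

theorem genFunP_succ (p : ℕ) :
    genFunP (p + 1) = genFunP p + X ^ (p + 1) * C X * genFunP (p + 1) := by
  ext n m
  rw [map_add, map_add, coeff_coeff_X_pow_mul_C_X_mul]
  simp only [genFunP, coeff_mk]
  rw [P_succ, Nat.cast_add, Nat.cast_ite, Nat.cast_zero]

theorem genFunQ_succ (p : ℕ) : genFunQ (p + 1) = (1 + X ^ (p + 1) * C X) * genFunQ p := by
  ext n m
  rw [add_mul, one_mul, map_add, map_add, coeff_coeff_X_pow_mul_C_X_mul]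
  simp only [genFunQ, coeff_mk]
  rw [Q_succ, Nat.cast_add, Nat.cast_ite, Nat.cast_zero]

theorem genFunP_mul_prod (p : ℕ) :
    genFunP p * ∏ i ∈ Finset.range p, (1 - X ^ (i + 1) * C X) = 1 := by
  induction p with
  | zero => simp [genFunP_zero]
  | succ p ih =>
    rw [Finset.prod_range_succ]
    linear_combination (∏ i ∈ Finset.range p, (1 - X ^ (i + 1) * C X)) * genFunP_succ p + ih

theorem genFunQ_eq_prod (p : ℕ) : genFunQ p = ∏ i ∈ Finset.range p, (1 + X ^ (i + 1) * C X) := by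
  induction p with
  | zero => simp [genFunQ_zero]
  | succ p ih => rw [Finset.prod_range_succ, genFunQ_succ, ih, mul_comm]

theorem dilate_genFunQ_mul_genFunP (p : ℕ) :
    dilate 4 four_ne_zero (-1) (genFunQ p) * genFunP p
      = dilate 2 two_ne_zero 1 (genFunQ p) * genFunQ p := by
  have factor (t : ℤ⟦X⟧⟦X⟧) : 1 + -t ^ 4 = (1 - t) * (1 + t) * (1 + t ^ 2) := by ring
  simp only [genFunQ_eq_prod, map_prod, map_add, map_one, dilate_X_pow_mul_C_X, map_neg, neg_mul,
    one_mul]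
  rw [Finset.prod_congr rfl fun i _ => factor _, Finset.prod_mul_distrib, Finset.prod_mul_distrib]
  linear_combination (∏ i ∈ Finset.range p, (1 + X ^ (i + 1) * C X)) *
    (∏ i ∈ Finset.range p, (1 + (X ^ (i + 1) * C X) ^ 2)) * genFunP_mul_prod p

theorem stmt_9 (n m p : ℕ) :
    ∑ k ∈ Finset.range (n / 4 + 1), ∑ l ∈ Finset.range (m / 4 + 1),
      (-1 : ℤ) ^ l * P (n - 4 * k) (m - 4 * l) p * Q k l p
    = ∑ k ∈ Finset.range (n / 2 + 1), ∑ l ∈ Finset.range (m / 2 + 1),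
      ((Q (n - 2 * k) (m - 2 * l) p : ℤ) * Q k l p) := by
  have h := congrArg (fun F => coeff m (coeff n F)) (dilate_genFunQ_mul_genFunP p)
  simp only [coeff_coeff_dilate_mul, genFunP, genFunQ, coeff_mk, one_pow, one_mul] at h
  convert h using 3 <;> ring
end

section
/- For all nonnegative integers n and m, the following identity holds in ℚ(q): Σ_{k=0}^{⌊n/3⌋} (−1)^k · q^{C(n−3k,2)} · [m+1 choose n−3k]_q · [m+k choose m]_{q^3} = Σ_{k=0}^{n} cos((2k−n)π/3) · [m+n−k choose m]_q · [m+k choose m]_q. -/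
/-- The Gaussian (q-)binomial coefficient `[a choose b]` with parameter `x`,
`∏_{j=1}^{b} (1 - x^{a-b+j})/(1 - x^j)`, an element of `ℚ(q)` when `x = q`;
it is zero when `b > a`. -/
noncomputable def qbinom (x : RatFunc ℚ) (a b : ℕ) : RatFunc ℚ :=
  if b ≤ a then ∏ j ∈ Finset.range b, (1 - x ^ (a - b + j + 1)) / (1 - x ^ (j + 1)) else 0

/-- The indeterminate `q` of the field of rational functions `ℚ(q)`. -/
noncomputable def q : RatFunc ℚ := RatFunc.X

/-!
Adjoin to `ℚ(q)` a root `ζ` of `T² - T + 1` (so `ζ + ζ⁻¹ = 1`, `ζ = e^{iπ/3}`). Then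
`(1 + y)(1 - ζy)(1 - ζ⁻¹y) = 1 + y³`, so
`∏_{j≤m} (1 + q^j X) / ∏_{j≤m} (1 + q^{3j} X³) = 1 / (∏_{j≤m} (1 - ζq^j X) ∏_{j≤m} (1 - ζ⁻¹q^j X))`.
By the q-binomial theorems `∏_{j<M} (1 + q^j X) = ∑_a q^{C(a,2)} [M, a] X^a` and
`1 / ∏_{j≤m} (1 - q^j X) = ∑_k [m+k, m] X^k`, the coefficient of `X^n` on the left is the
left-hand side of the identity, and on the right it is `∑_k [m+k, m] [m+n-k, m] ζ^{2k-n}`.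
Symmetrising in `k ↔ n - k` turns `ζ^{2k-n}` into `(ζ^{2k-n} + ζ^{n-2k}) / 2 = cos((2k-n)π/3)`.
-/

open Finset PowerSeries

theorem Finset.sum_range_succ_ite_dvd {M : Type*} [AddCommMonoid M] {d : ℕ} (hd : d ≠ 0)
    (n : ℕ) (h : ℕ → M) :
    ∑ j ∈ range (n + 1), (if d ∣ j then h j else 0) = ∑ k ∈ range (n / d + 1), h (d * k) := by
  rw [← sum_filter]
  refine sum_nbij' (· / d) (d * ·) ?_ ?_ ?_ ?_ ?_
  · intro j hj
    simp only [mem_filter, mem_range] at hj ⊢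
    exact Nat.lt_succ_of_le (Nat.div_le_div_right (Nat.le_of_lt_succ hj.1))
  · intro k hk
    simp only [mem_filter, mem_range] at hk ⊢
    have hkd := (Nat.le_div_iff_mul_le (Nat.pos_of_ne_zero hd)).mp (Nat.le_of_lt_succ hk)
    exact ⟨by rw [mul_comm]; omega, dvd_mul_right d k⟩
  · intro j hj
    exact Nat.mul_div_cancel' (mem_filter.mp hj).2
  · intro k _
    exact Nat.mul_div_cancel_left k (Nat.pos_of_ne_zero hd)
  · intro j hj
    rw [Nat.mul_div_cancel' (mem_filter.mp hj).2]

theorem PowerSeries.coeff_mul_expand {S : Type*} [CommRing S] (d : ℕ) (hd : d ≠ 0)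
    (f g : S⟦X⟧) (n : ℕ) :
    coeff n (f * expand d hd g) = ∑ k ∈ range (n / d + 1), coeff (n - d * k) f * coeff k g := by
  rw [mul_comm, coeff_mul, Nat.sum_antidiagonal_eq_sum_range_succ
    (fun j i => coeff j (expand d hd g) * coeff i f)]
  simp only [coeff_expand, ite_mul, zero_mul, sum_range_succ_ite_dvd hd,
    Nat.mul_div_cancel_left _ (Nat.pos_of_ne_zero hd), mul_comm (coeff _ g)]

@[simp]
theorem PowerSeries.rescale_C {S : Type*} [CommSemiring S] (a r : S) : rescale a (C r) = C r := by
  ext n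
  rcases n with _ | n <;> simp [coeff_C]

theorem pow_mul_inv_pow_sub_eq_zpow {G : Type*} [CommGroup G] (u : G) {k n : ℕ} (hk : k ≤ n) :
    u ^ k * u⁻¹ ^ (n - k) = u ^ (2 * (k : ℤ) - n) := by
  rw [inv_pow, ← zpow_natCast, ← zpow_natCast, ← zpow_neg, ← zpow_add, Nat.cast_sub hk]
  ring_nf

theorem two_mul_coeff_rescale_mul_rescale_inv {S : Type*} [CommRing S] (u : Sˣ) (f : S⟦X⟧)
    (n : ℕ) :
    2 * coeff n (rescale (u : S) f * rescale (↑u⁻¹ : S) f) =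
      ∑ k ∈ range (n + 1), ((u ^ (2 * (k : ℤ) - n) : Sˣ) + (u ^ (-(2 * (k : ℤ) - n)) : Sˣ) : S) *
        coeff k f * coeff (n - k) f := by
  rw [two_mul]
  nth_rewrite 1 [mul_comm (rescale (u : S) f)]
  simp only [coeff_mul, Nat.sum_antidiagonal_eq_sum_range_succ_mk, coeff_rescale,
    ← sum_add_distrib]
  refine sum_congr rfl fun k hk => ?_
  have hkn : k ≤ n := Nat.le_of_lt_succ (mem_range.mp hk)
  have h₁ := congrArg Units.val (pow_mul_inv_pow_sub_eq_zpow u hkn)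
  have h₂ : u⁻¹ ^ k * u ^ (n - k) = u ^ (-(2 * (k : ℤ) - n)) := by
    rw [zpow_neg, ← pow_mul_inv_pow_sub_eq_zpow u hkn]
    group
  replace h₂ := congrArg Units.val h₂
  push_cast at h₁ h₂
  rw [← h₁, ← h₂]
  ring

theorem one_add_mul_one_sub_mul_one_sub {S : Type*} [CommRing S] {a b : S} (hadd : a + b = 1)
    (hmul : a * b = 1) (y : S) : (1 + y) * (1 - a * y) * (1 - b * y) = 1 + y ^ 3 := by
  linear_combination (-y - y ^ 2) * hadd + (y ^ 2 + y ^ 3) * hmul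

theorem Int.eq_of_add_one_add_sub_one_eq {S : Type*} [AddCommGroup S] {v w : ℤ → S}
    (hv : ∀ z, v (z + 1) + v (z - 1) = v z) (hw : ∀ z, w (z + 1) + w (z - 1) = w z)
    (h₀ : v 0 = w 0) (h₁ : v 1 = w 1) : v = w := by
  suffices h : ∀ z, v z = w z ∧ v (z + 1) = w (z + 1) from funext fun z => (h z).1
  intro z
  induction z using Int.induction_on with
  | zero => exact ⟨h₀, h₁⟩
  | succ i ih =>
    refine ⟨ih.2, ?_⟩
    have e₁ := hv (i + 1)
    have e₂ := hw (i + 1)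
    rw [add_sub_cancel_right] at e₁ e₂
    rw [eq_sub_of_add_eq e₁, eq_sub_of_add_eq e₂, ih.1, ih.2]
  | pred i ih =>
    refine ⟨?_, by rw [sub_add_cancel]; exact ih.1⟩
    rw [eq_sub_of_add_eq' (hv (-i)), eq_sub_of_add_eq' (hw (-i)), ih.1, ih.2]

theorem Real.cos_add_one_mul_pi_div_three_add_cos_sub_one_mul (z : ℤ) :
    cos (((z + 1 : ℤ) : ℝ) * Real.pi / 3) + cos (((z - 1 : ℤ) : ℝ) * Real.pi / 3) =
      cos (z * Real.pi / 3) := by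
  have h : (((z + 1 : ℤ) : ℝ) * Real.pi / 3 - ((z - 1 : ℤ) : ℝ) * Real.pi / 3) / 2 =
      Real.pi / 3 := by
    push_cast; ring
  rw [cos_add_cos, h, cos_pi_div_three]
  push_cast
  ring_nf

theorem map_two_mul_eq_zpow_add_zpow_neg {S : Type*} [CommRing S] (f : ℚ →+* S) (u : Sˣ)
    (hu : (u : S) + ↑u⁻¹ = 1) (c : ℤ → ℚ)
    (hc : ∀ z : ℤ, (c z : ℝ) = Real.cos (z * Real.pi / 3)) (z : ℤ) :
    f (2 * c z) = ((u ^ z : Sˣ) + (u ^ (-z) : Sˣ) : S) := by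
  -- Both sides satisfy `v (z + 1) + v (z - 1) = v z`: since `2 cos (π/3) = 1`, resp. `u + u⁻¹ = 1`.
  have hc' (z : ℤ) : c (z + 1) + c (z - 1) = c z := Rat.cast_injective (α := ℝ) <| by
    push_cast
    rw [hc, hc, hc, Real.cos_add_one_mul_pi_div_three_add_cos_sub_one_mul]
  set w : ℤ → S := fun z => ((u ^ z : Sˣ) + (u ^ (-z) : Sˣ) : S)
  have hw (z : ℤ) : w (z + 1) + w (z - 1) = w z := by
    simp only [w, show -(z + 1) = -z - 1 by ring, show -(z - 1) = -z + 1 by ring, zpow_add_one,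
      zpow_sub_one, Units.val_mul]
    linear_combination (↑(u ^ z) + ↑(u ^ (-z)) : S) * hu
  have h₀ : c 0 = 1 := Rat.cast_injective (α := ℝ) (by simp [hc])
  have h₁ : c 1 = 1 / 2 := Rat.cast_injective (α := ℝ) (by simp [hc, Real.cos_pi_div_three])
  refine congrFun (Int.eq_of_add_one_add_sub_one_eq (v := fun z => f (2 * c z)) (w := w)
    (fun z => ?_) hw ?_ ?_) z
  · rw [← map_add, ← mul_add, hc' z]
  · simp [w, h₀, one_add_one_eq_two, map_ofNat f 2]
  · simp [w, h₁, hu]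

section QBinomial

variable {x : RatFunc ℚ}

theorem qbinom_zero_right (x : RatFunc ℚ) (a : ℕ) : qbinom x a 0 = 1 := by
  simp [qbinom]

theorem qbinom_of_lt (x : RatFunc ℚ) {a b : ℕ} (h : a < b) : qbinom x a b = 0 := by
  simp [qbinom, Nat.not_le.mpr h]

theorem one_sub_pow_ne_zero (hx : ¬IsOfFinOrder x) {d : ℕ} (hd : d ≠ 0) : 1 - x ^ d ≠ 0 :=
  fun h => hx (isOfFinOrder_iff_pow_eq_one.mpr ⟨d, Nat.pos_of_ne_zero hd, (sub_eq_zero.mp h).symm⟩)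

theorem qbinom_self (hx : ¬IsOfFinOrder x) (a : ℕ) : qbinom x a a = 1 := by
  rw [qbinom, if_pos le_rfl]
  refine prod_eq_one fun j _ => ?_
  rw [Nat.sub_self, zero_add, div_self (one_sub_pow_ne_zero hx j.succ_ne_zero)]

theorem qbinom_succ_succ_mul (hx : ¬IsOfFinOrder x) (a b : ℕ) :
    qbinom x (a + 1) (b + 1) * (1 - x ^ (b + 1)) = qbinom x a b * (1 - x ^ (a + 1)) := by
  rcases lt_or_ge a b with h | h
  · rw [qbinom_of_lt x h, qbinom_of_lt x (by omega), zero_mul, zero_mul]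
  rw [qbinom, qbinom, if_pos (by omega), if_pos h, prod_range_succ,
    show a + 1 - (b + 1) + b + 1 = a + 1 by omega, Nat.add_sub_add_right]
  field_simp [one_sub_pow_ne_zero hx b.succ_ne_zero]

theorem qbinom_succ_right_mul (hx : ¬IsOfFinOrder x) (a b : ℕ) :
    qbinom x a (b + 1) * (1 - x ^ (b + 1)) = qbinom x a b * (1 - x ^ (a - b)) := by
  rcases lt_or_ge b a with h | h
  · rw [qbinom, qbinom, if_pos (Nat.succ_le_of_lt h), if_pos h.le, prod_div_distrib,
      prod_div_distrib, prod_range_succ' (fun j => 1 - x ^ (a - (b + 1) + j + 1)),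
      prod_range_succ (fun j => 1 - x ^ (j + 1))]
    simp only [show ∀ j, a - (b + 1) + (j + 1) + 1 = a - b + j + 1 by omega,
      show a - (b + 1) + 0 + 1 = a - b by omega]
    field_simp [one_sub_pow_ne_zero hx b.succ_ne_zero]
  · rw [qbinom_of_lt x (by omega : a < b + 1), zero_mul]
    rcases h.lt_or_eq with h | rfl
    · rw [qbinom_of_lt x h, zero_mul]
    · rw [Nat.sub_self, pow_zero, sub_self, mul_zero]

theorem qbinom_succ_succ (hx : ¬IsOfFinOrder x) (a b : ℕ) :
    qbinom x (a + 1) (b + 1) = qbinom x a b + x ^ (b + 1) * qbinom x a (b + 1) := by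
  rcases lt_or_ge a b with h | h
  · rw [qbinom_of_lt x h, qbinom_of_lt x (by omega : a < b + 1),
      qbinom_of_lt x (by omega : a + 1 < b + 1)]
    ring
  refine mul_right_cancel₀ (one_sub_pow_ne_zero hx b.add_one_ne_zero) ?_
  have hpow : x ^ (b + 1) * x ^ (a - b) = x ^ (a + 1) := by rw [← pow_add]; congr 1; omega
  linear_combination qbinom_succ_succ_mul hx a b - x ^ (b + 1) * qbinom_succ_right_mul hx a b
    + qbinom x a b * hpow

theorem qbinom_succ_succ' (hx : ¬IsOfFinOrder x) (a b : ℕ) :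
    qbinom x (a + 1) (b + 1) = qbinom x a (b + 1) + x ^ (a - b) * qbinom x a b := by
  linear_combination qbinom_succ_succ hx a b - qbinom_succ_right_mul hx a b

noncomputable def qbinomSeries (x : RatFunc ℚ) (m : ℕ) : (RatFunc ℚ)⟦X⟧ :=
  mk fun k => qbinom x (m + k) m

theorem qbinomSeries_zero (x : RatFunc ℚ) : qbinomSeries x 0 = PowerSeries.mk 1 := by
  ext k
  simp [qbinomSeries, qbinom_zero_right]

theorem qbinomSeries_succ_mul (hx : ¬IsOfFinOrder x) (m : ℕ) :
    qbinomSeries x (m + 1) * (1 - C (x ^ (m + 1)) * X) = qbinomSeries x m := by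
  ext t
  rcases t with _ | t
  · simp [qbinomSeries, qbinom_self hx]
  · have := qbinom_succ_succ hx (m + t + 1) m
    simp only [mul_sub, mul_one, map_sub, ← mul_assoc, coeff_succ_mul_X, mul_comm _ (C _),
      coeff_C_mul, qbinomSeries, coeff_mk]
    rw [show m + 1 + (t + 1) = m + t + 1 + 1 by omega, show m + (t + 1) = m + t + 1 by omega,
      show m + 1 + t = m + t + 1 by omega, this]
    ring

theorem qbinomSeries_mul_prod (hx : ¬IsOfFinOrder x) (m : ℕ) :
    qbinomSeries x m * ∏ j ∈ range (m + 1), (1 - C (x ^ j) * X) = 1 := by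
  induction m with
  | zero => simp [qbinomSeries_zero, mk_one_mul_one_sub_eq_one]
  | succ m ih =>
    rw [prod_range_succ, mul_comm (∏ j ∈ range (m + 1), _), ← mul_assoc,
      qbinomSeries_succ_mul hx, ih]

theorem coeff_prod_one_add_C_mul_X (hx : ¬IsOfFinOrder x) (M a : ℕ) :
    coeff a (∏ j ∈ range M, (1 + C (x ^ j) * X)) = x ^ a.choose 2 * qbinom x M a := by
  induction M generalizing a with
  | zero =>
    rcases a with _ | a
    · simp [qbinom_zero_right]
    · simp [qbinom_of_lt x a.succ_pos, coeff_one]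
  | succ M ih =>
    rw [prod_range_succ]
    rcases a with _ | a
    · simp [qbinom_zero_right]
    simp only [mul_add, mul_one, map_add, ← mul_assoc, coeff_succ_mul_X, mul_comm _ (C _),
      coeff_C_mul, ih, qbinom_succ_succ' hx]
    rcases le_or_gt a M with h | h
    · have hpow : x ^ (a + 1).choose 2 * x ^ (M - a) = x ^ M * x ^ a.choose 2 := by
        have hch : (a + 1).choose 2 = a + a.choose 2 := by
          rw [Nat.choose_succ_succ', Nat.choose_one_right]
        rw [← pow_add, ← pow_add, hch]
        congr 1
        omega
      linear_combination -qbinom x M a * hpow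
    · rw [qbinom_of_lt x h]
      ring

theorem coeff_prod_mul_expand_rescale_qbinomSeries (hx : ¬IsOfFinOrder x)
    (m n : ℕ) :
    coeff n ((∏ j ∈ range (m + 1), (1 + C (x ^ j) * X)) *
        expand 3 three_ne_zero (rescale (-1) (qbinomSeries (x ^ 3) m))) =
      ∑ k ∈ range (n / 3 + 1), (-1) ^ k * x ^ (n - 3 * k).choose 2 *
        qbinom x (m + 1) (n - 3 * k) * qbinom (x ^ 3) (m + k) m := by
  rw [coeff_mul_expand]
  refine sum_congr rfl fun k _ => ?_
  rw [coeff_prod_one_add_C_mul_X hx, coeff_rescale, qbinomSeries, coeff_mk]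
  ring

end QBinomial

theorem not_isOfFinOrder_q : ¬IsOfFinOrder q := by
  intro hq
  obtain ⟨d, hd, h⟩ := isOfFinOrder_iff_pow_eq_one.mp hq
  have hX : (Polynomial.X ^ d : Polynomial ℚ) = 1 := RatFunc.algebraMap_injective ℚ <| by
    simpa [q, ← RatFunc.algebraMap_X] using h
  simpa [hd.ne'] using congrArg Polynomial.natDegree hX

section CubeRoots

variable {R : Type*} [CommRing R] [Algebra (RatFunc ℚ) R] {x : RatFunc ℚ}

local notation "ι" => PowerSeries.map (algebraMap (RatFunc ℚ) R)

theorem rescale_map_qbinomSeries_mul_prod (hx : ¬IsOfFinOrder x) (a : R) (m : ℕ) :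
    rescale a (ι (qbinomSeries x m)) *
      ∏ j ∈ range (m + 1), (1 - C (a * algebraMap _ R x ^ j) * X) = 1 := by
  have h := congrArg (fun f => rescale a (ι f)) (qbinomSeries_mul_prod hx m)
  simpa [map_prod, rescale_X, mul_assoc, mul_comm, mul_left_comm] using h

theorem expand_rescale_qbinomSeries_mul_prod (hx : ¬IsOfFinOrder x) (m : ℕ) :
    expand 3 three_ne_zero (rescale (-1) (qbinomSeries (x ^ 3) m)) *
      ∏ j ∈ range (m + 1), (1 + C ((x ^ 3) ^ j) * X ^ 3) = 1 := by
  have hx3 : ¬IsOfFinOrder (x ^ 3) := by simpa using hx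
  have h := congrArg (fun f => expand 3 three_ne_zero (rescale (-1) f))
    (qbinomSeries_mul_prod hx3 m)
  simpa [map_prod, rescale_X, expand_C] using h

theorem map_prod_mul_expand_eq_rescale_mul_rescale (hx : ¬IsOfFinOrder x) (u : Rˣ)
    (hu : (u : R) + ↑u⁻¹ = 1) (m : ℕ) :
    ι ((∏ j ∈ range (m + 1), (1 + C (x ^ j) * X)) *
        expand 3 three_ne_zero (rescale (-1) (qbinomSeries (x ^ 3) m))) =
      rescale (u : R) (ι (qbinomSeries x m)) * rescale (↑u⁻¹ : R) (ι (qbinomSeries x m)) := by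
  have hD₁ := rescale_map_qbinomSeries_mul_prod hx (u : R) m
  have hD₂ := rescale_map_qbinomSeries_mul_prod hx (↑u⁻¹ : R) m
  have hB := congrArg ι (expand_rescale_qbinomSeries_mul_prod hx m)
  have hG : ι (∏ j ∈ range (m + 1), (1 + C (x ^ j) * X)) *
      (∏ j ∈ range (m + 1), (1 - C (↑u * algebraMap _ R x ^ j) * X)) *
      (∏ j ∈ range (m + 1), (1 - C (↑u⁻¹ * algebraMap _ R x ^ j) * X)) =
      ι (∏ j ∈ range (m + 1), (1 + C ((x ^ 3) ^ j) * X ^ 3)) := by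
    simp only [map_prod, map_add, map_one, map_mul, map_C, map_X, map_pow, ← prod_mul_distrib]
    refine prod_congr rfl fun j _ => ?_
    have hadd : C (u : R) + C (↑u⁻¹ : R) = 1 := by rw [← map_add, hu, map_one]
    have hmul : C (u : R) * C (↑u⁻¹ : R) = 1 := by rw [← map_mul, Units.mul_inv, map_one]
    linear_combination one_add_mul_one_sub_mul_one_sub hadd hmul (C (algebraMap _ R x) ^ j * X)
  rw [map_mul, map_one] at hB
  rw [map_mul]
  -- `F * B = D₁ * D₂` because `D₁ * P₁ = D₂ * P₂ = 1` and `(F * P₁ * P₂) * B = 1`.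
  set F := ι (∏ j ∈ range (m + 1), (1 + C (x ^ j) * X))
  set B := ι (expand 3 three_ne_zero (rescale (-1) (qbinomSeries (x ^ 3) m)))
  set D₁ := rescale (u : R) (ι (qbinomSeries x m))
  set D₂ := rescale (↑u⁻¹ : R) (ι (qbinomSeries x m))
  set P₁ := ∏ j ∈ range (m + 1), (1 - C (↑u * algebraMap _ R x ^ j) * X)
  set P₂ := ∏ j ∈ range (m + 1), (1 - C (↑u⁻¹ * algebraMap _ R x ^ j) * X)
  linear_combination (-F * B * D₂ * P₂) * hD₁ - F * B * hD₂ + D₁ * D₂ * B * hG + D₁ * D₂ * hB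

theorem two_mul_coeff_rescale_mul_rescale_inv_qbinomSeries (u : Rˣ) (hu : (u : R) + ↑u⁻¹ = 1)
    (c : ℤ → ℚ) (hc : ∀ z : ℤ, (c z : ℝ) = Real.cos (z * Real.pi / 3)) (m n : ℕ) :
    2 * coeff n (rescale (u : R) (ι (qbinomSeries x m)) *
        rescale (↑u⁻¹ : R) (ι (qbinomSeries x m))) =
      algebraMap (RatFunc ℚ) R (2 * ∑ k ∈ range (n + 1),
        algebraMap ℚ (RatFunc ℚ) (c (2 * (k : ℤ) - n)) * qbinom x (m + n - k) m *
          qbinom x (m + k) m) := by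
  rw [two_mul_coeff_rescale_mul_rescale_inv, mul_sum, map_sum]
  refine sum_congr rfl fun k hk => ?_
  have hcos := map_two_mul_eq_zpow_add_zpow_neg
    ((algebraMap (RatFunc ℚ) R).comp (algebraMap ℚ _)) u hu c hc (2 * k - n)
  rw [RingHom.comp_apply, map_mul, map_ofNat] at hcos
  rw [coeff_map, coeff_map, qbinomSeries, coeff_mk, coeff_mk, ← hcos,
    show m + (n - k) = m + n - k by have := mem_range.mp hk; omega]
  simp only [map_mul, map_ofNat]
  ring

end CubeRoots

theorem stmt_14 (n m : ℕ) (c : ℤ → ℚ)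
    (hc : ∀ z : ℤ, (c z : ℝ) = Real.cos (z * Real.pi / 3)) :
    ∑ k ∈ Finset.range (n / 3 + 1),
      (-1 : RatFunc ℚ) ^ k * q ^ Nat.choose (n - 3 * k) 2 * qbinom q (m + 1) (n - 3 * k) *
        qbinom (q ^ 3) (m + k) m
    = ∑ k ∈ Finset.range (n + 1),
        algebraMap ℚ (RatFunc ℚ) (c (2 * (k : ℤ) - n)) * qbinom q (m + n - k) m *
          qbinom q (m + k) m := by
  let f : Polynomial (RatFunc ℚ) := Polynomial.X ^ 2 - Polynomial.X + 1
  have hf : f.degree = 2 := by unfold f; compute_degree!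
  have : Nontrivial (AdjoinRoot f) := AdjoinRoot.nontrivial f (by simp [hf])
  have hroot : AdjoinRoot.root f * (1 - AdjoinRoot.root f) = 1 := by
    have h := AdjoinRoot.eval₂_root f
    simp only [Polynomial.eval₂_add, Polynomial.eval₂_sub, Polynomial.eval₂_X_pow,
      Polynomial.eval₂_X, Polynomial.eval₂_one, f] at h
    linear_combination -h
  let u : (AdjoinRoot f)ˣ := ⟨_, _, hroot, by rw [mul_comm, hroot]⟩
  have hu : (u : AdjoinRoot f) + ↑u⁻¹ = 1 := add_sub_cancel _ _
  have key := congrArg (coeff n)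
    (map_prod_mul_expand_eq_rescale_mul_rescale not_isOfFinOrder_q u hu m)
  rw [coeff_map, coeff_prod_mul_expand_rescale_qbinomSeries not_isOfFinOrder_q] at key
  refine mul_left_cancel₀ (two_ne_zero (α := RatFunc ℚ))
    ((algebraMap _ (AdjoinRoot f)).injective ?_)
  rw [← two_mul_coeff_rescale_mul_rescale_inv_qbinomSeries (x := q) u hu c hc, ← key, map_mul,
    map_ofNat]
end
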